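/- Explicit critical radius in dimension 3: for α ∈ (0,2) and γ > 0, define g^{3,α}(d) := ((d(d+1) − 2)/(2γ(α I^{3,α} − μ_d^{3,α})))^{1/(4−α)} for d ≥ 2. Then the minimum over d ≥ 2 is attained at d = 2, and the critical radius is R̄(3, α, γ) = ((6−α)(4−α)/(2^{3−α} γ α π))^{1/(4−α)}; equivalently the critical mass is m_loc(3,α,γ) = (4/3)π ((6−α)(4−α)/(2^{3−α}γαπ))^{3/(4−α)}. -/
import Mathlib


open Real

/-- The explicit value `I^{3,α} = 2π·2^{2-α}/((4-α)(2-α))`. -/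
noncomputable def Ival3 (α : ℝ) : ℝ := 2 * π * 2 ^ (2 - α) / ((4 - α) * (2 - α))

/-- The explicit Funk–Hecke coefficient `μ_d^{3,α}` in dimension 3. -/
noncomputable def mu3 (α : ℝ) (d : ℕ) : ℝ :=
  2 ^ (2 - α) * π * α * (∏ j ∈ Finset.Icc 1 (d - 1), (α / 2 + (j : ℝ))) /
    ((∏ j ∈ Finset.Icc 1 (d - 1), (1 - α / 2 + (j : ℝ))) * ((d : ℝ) + 1 - α / 2) * (2 - α))

/-- The stability radius function `g^{3,α}(d)` for degree `d ≥ 2`. -/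
noncomputable def gfun3 (α γ : ℝ) (d : ℕ) : ℝ :=
  (((d : ℝ) * ((d : ℝ) + 1) - 2) / (2 * γ * (α * Ival3 α - mu3 α d))) ^ ((1 : ℝ) / (4 - α))

/-- Auxiliary ratio `r_d = P_d / (Q_d (d+1-α/2))`. -/
noncomputable def rr (α : ℝ) (d : ℕ) : ℝ :=
  (∏ j ∈ Finset.Icc 1 (d - 1), (α / 2 + (j : ℝ))) /
    ((∏ j ∈ Finset.Icc 1 (d - 1), (1 - α / 2 + (j : ℝ))) * ((d : ℝ) + 1 - α / 2))

lemma Qpos {α : ℝ} (h2 : α < 2) (d : ℕ) :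
    0 < ∏ j ∈ Finset.Icc 1 (d - 1), (1 - α / 2 + (j : ℝ)) := by
  apply Finset.prod_pos
  intro j _
  have : (0:ℝ) ≤ j := Nat.cast_nonneg j
  linarith

lemma Ppos {α : ℝ} (h0 : 0 < α) (d : ℕ) :
    0 < ∏ j ∈ Finset.Icc 1 (d - 1), (α / 2 + (j : ℝ)) := by
  apply Finset.prod_pos
  intro j _
  have : (0:ℝ) ≤ j := Nat.cast_nonneg j
  linarith

lemma rr_pos {α : ℝ} (h0 : 0 < α) (h2 : α < 2) (d : ℕ) : 0 < rr α d := by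
  have hd : (0:ℝ) ≤ d := Nat.cast_nonneg d
  exact div_pos (Ppos h0 d) (mul_pos (Qpos h2 d) (by linarith))

lemma mu_eq {α : ℝ} (h0 : 0 < α) (h2 : α < 2) (d : ℕ) :
    α * Ival3 α - mu3 α d =
      (2 ^ (2 - α) * π * α / (2 - α)) * (2 / (4 - α) - rr α d) := by
  have h4 : (4 - α) ≠ 0 := by linarith
  have h2' : (2 - α) ≠ 0 := by linarith
  have e1 : α * Ival3 α = (2 ^ (2 - α) * π * α / (2 - α)) * (2 / (4 - α)) := by
    rw [Ival3]; field_simp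
  have e2 : mu3 α d = (2 ^ (2 - α) * π * α / (2 - α)) * rr α d := by
    rw [mu3, rr, div_mul_div_comm]
    congr 1
    ring
  rw [e1, e2]; ring

lemma rr2_val {α : ℝ} (h0 : 0 < α) (h2 : α < 2) :
    rr α 2 = 2 * (α + 2) / ((4 - α) * (6 - α)) := by
  have h4 : (4 - α) ≠ 0 := by linarith
  have h6 : (6 - α) ≠ 0 := by linarith
  have hA : (1 - α / 2 + (1:ℝ)) ≠ 0 := by linarith
  have hB : ((2:ℝ) + 1 - α / 2) ≠ 0 := by linarith
  rw [rr]
  norm_num [Finset.Icc_self]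
  rw [div_eq_div_iff (by nlinarith) (by nlinarith)]
  ring

lemma rr_succ {α : ℝ} (h0 : 0 < α) (h2 : α < 2) (n : ℕ) (hn : 1 ≤ n) :
    rr α (n + 1) = rr α n * ((α / 2 + n) / ((n : ℝ) + 2 - α / 2)) := by
  obtain ⟨m, rfl⟩ : ∃ m, n = m + 1 := ⟨n - 1, by omega⟩
  have hQ : (∏ j ∈ Finset.Icc 1 m, (1 - α / 2 + (j : ℝ))) ≠ 0 := by
    have := Qpos h2 (m + 1); simpa using this.ne'
  have hm : (0:ℝ) ≤ m := Nat.cast_nonneg m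
  have h1 : ((m:ℝ) + 2 - α / 2) ≠ 0 := by linarith
  have h2' : ((m:ℝ) + 3 - α / 2) ≠ 0 := by linarith
  rw [rr, rr]
  simp only [Nat.add_sub_cancel]
  rw [Finset.prod_Icc_succ_top (by omega : 1 ≤ m + 1),
      Finset.prod_Icc_succ_top (by omega : 1 ≤ m + 1)]
  rw [div_mul_div_comm]
  congr 1 <;> push_cast <;> ring

lemma key {α : ℝ} (h0 : 0 < α) (h2 : α < 2) (d : ℕ) (hd : 2 ≤ d) :
    rr α d ≤ rr α 2 ∧
      4 * (2 / (4 - α) - rr α d) ≤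
        ((d : ℝ) * ((d : ℝ) + 1) - 2) * (2 / (4 - α) - rr α 2) := by
  induction d, hd using Nat.le_induction with
  | base => exact ⟨le_refl _, by norm_num⟩
  | succ n hn ih =>
    obtain ⟨ih1, ih2⟩ := ih
    have hx0 : 0 < rr α n := rr_pos h0 h2 n
    have hrec := rr_succ h0 h2 n (by omega)
    have hn2 : (2:ℝ) ≤ n := by exact_mod_cast hn
    have hden : (0:ℝ) < (n : ℝ) + 2 - α / 2 := by linarith
    have hnum : (0:ℝ) < α / 2 + n := by linarith
    have hratio : (α / 2 + (n:ℝ)) / ((n : ℝ) + 2 - α / 2) ≤ 1 := by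
      rw [div_le_one hden]; linarith
    constructor
    · calc rr α (n + 1) = rr α n * ((α / 2 + n) / ((n : ℝ) + 2 - α / 2)) := hrec
        _ ≤ rr α n * 1 := by
            apply mul_le_mul_of_nonneg_left hratio hx0.le
        _ = rr α n := mul_one _
        _ ≤ rr α 2 := ih1
    · -- the inequality
      have hr2 := rr2_val h0 h2
      have h46 : (0:ℝ) < (4 - α) * (6 - α) := by nlinarith
      have hx2 : rr α n * ((4 - α) * (6 - α)) ≤ 2 * (α + 2) := by
        rw [hr2, le_div_iff₀ h46] at ih1
        linarith
      have hs2 : 2 / (4 - α) - rr α 2 = 4 * (2 - α) / ((4 - α) * (6 - α)) := by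
        rw [hr2]
        have h4 : (4 - α) ≠ 0 := by linarith
        have h6 : (6 - α) ≠ 0 := by linarith
        field_simp
        ring
      rw [hs2] at ih2 ⊢
      have h1q : (1:ℝ) - (α / 2 + (n:ℝ)) / ((n:ℝ) + 2 - α / 2)
          = (2 - α) / ((n:ℝ) + 2 - α / 2) := by
        rw [eq_div_iff hden.ne', sub_mul, one_mul, div_mul_cancel₀ _ hden.ne']
        ring
      have hextra : 4 * rr α n * ((2 - α) / ((n:ℝ) + 2 - α / 2))
          ≤ (2 * (n:ℝ) + 2) * (4 * (2 - α) / ((4 - α) * (6 - α))) := by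
        rw [mul_div_assoc' (4 * rr α n), mul_div_assoc' (2 * (n:ℝ) + 2),
          div_le_div_iff₀ hden h46]
        have hc : (0:ℝ) ≤ 4 * (2 - α) := by linarith
        have hstep : 2 * (α + 2) ≤ (2 * (n:ℝ) + 2) * ((n:ℝ) + 2 - α / 2) := by
          nlinarith [hn2]
        linarith [mul_le_mul_of_nonneg_left hx2 hc, mul_le_mul_of_nonneg_left hstep hc]
      have heq : 4 * (2 / (4 - α) - rr α (n + 1))
          = 4 * (2 / (4 - α) - rr α n) + 4 * rr α n * ((2 - α) / ((n:ℝ) + 2 - α / 2)) := by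
        rw [hrec, ← h1q]; ring
      rw [heq]
      push_cast
      nlinarith [ih2, hextra]

theorem critical_radius_dim3 (α γ : ℝ) (h0 : 0 < α) (h2 : α < 2) (hγ : 0 < γ) :
    (∀ d : ℕ, 2 ≤ d → gfun3 α γ 2 ≤ gfun3 α γ d) ∧
    gfun3 α γ 2 = (((6 - α) * (4 - α)) / (2 ^ (3 - α) * γ * α * π)) ^ ((1 : ℝ) / (4 - α)) ∧
    (4 / 3) * π * (gfun3 α γ 2) ^ 3 =
      (4 / 3) * π * ((((6 - α) * (4 - α)) / (2 ^ (3 - α) * γ * α * π)) ^ ((3 : ℝ) / (4 - α))) := by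
  have hπ := Real.pi_pos
  have hp : (0:ℝ) < 2 ^ (2 - α) := Real.rpow_pos_of_pos two_pos _
  have hC : (0:ℝ) < 2 ^ (2 - α) * π * α / (2 - α) := by
    apply div_pos (by positivity); linarith
  have hs2 : 2 / (4 - α) - rr α 2 = 4 * (2 - α) / ((4 - α) * (6 - α)) := by
    rw [rr2_val h0 h2]
    have h4 : (4 - α) ≠ 0 := by linarith
    have h6 : (6 - α) ≠ 0 := by linarith
    field_simp
    ring
  have hs2pos : 0 < 2 / (4 - α) - rr α 2 := by
    rw [hs2]; apply div_pos <;> nlinarith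
  have hexp : (0:ℝ) ≤ 1 / (4 - α) := by
    apply le_of_lt; apply div_pos one_pos; linarith
  have geq : ∀ d : ℕ, gfun3 α γ d =
      (((d : ℝ) * ((d : ℝ) + 1) - 2) /
        (2 * γ * ((2 ^ (2 - α) * π * α / (2 - α)) * (2 / (4 - α) - rr α d))))
        ^ ((1 : ℝ) / (4 - α)) := by
    intro d; rw [gfun3, mu_eq h0 h2]
  have hmain : gfun3 α γ 2 =
      (((6 - α) * (4 - α)) / (2 ^ (3 - α) * γ * α * π)) ^ ((1 : ℝ) / (4 - α)) := by
    rw [geq 2]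
    congr 1
    have h23 : (2:ℝ) ^ (3 - α) = 2 * 2 ^ (2 - α) := by
      rw [show (3:ℝ) - α = 1 + (2 - α) by ring, Real.rpow_add two_pos, Real.rpow_one]
    rw [hs2, h23]
    have h4 : (4 - α) ≠ 0 := by linarith
    have h6 : (6 - α) ≠ 0 := by linarith
    have h2' : (2 - α) ≠ 0 := by linarith
    push_cast
    field_simp
    ring
  refine ⟨?_, hmain, ?_⟩
  · intro d hd
    obtain ⟨h1, hkey⟩ := key h0 h2 d hd
    have hsd : 0 < 2 / (4 - α) - rr α d := by linarith
    rw [geq 2, geq d]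
    apply Real.rpow_le_rpow _ _ hexp
    · positivity
    · rw [div_le_div_iff₀ (by positivity) (by positivity)]
      have hd2 : (2:ℝ) ≤ d := by exact_mod_cast hd
      have hC' := hC
      push_cast
      nlinarith [mul_le_mul_of_nonneg_left hkey (le_of_lt (mul_pos (mul_pos two_pos hγ) hC)),
        mul_pos (mul_pos two_pos hγ) hC]
  · rw [hmain]
    have hX : (0:ℝ) ≤ ((6 - α) * (4 - α)) / (2 ^ (3 - α) * γ * α * π) := by
      apply div_nonneg; nlinarith; positivity
    rw [← Real.rpow_natCast (_ ^ ((1:ℝ)/(4-α))) 3, ← Real.rpow_mul hX]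
    congr 1
    push_cast
    ring
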